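/- The figure-eight knot is ambient isotopic to its mirror image; that is, the figure-eight knot is amphicheiral. -/

import Mathlib

/-- Two subsets of `ℝ³` are ambient isotopic if there is a continuous family of
homeomorphisms of `ℝ³`, starting at the identity, carrying the first set onto the second. -/
def AmbientIsotopic (A B : Set (Fin 3 → ℝ)) : Prop :=
  ∃ F : ℝ → (Fin 3 → ℝ) → (Fin 3 → ℝ),
    Continuous (fun p : ℝ × (Fin 3 → ℝ) => F p.1 p.2) ∧
    (∀ t : ℝ, IsHomeomorph (F t)) ∧
    F 0 = id ∧ F 1 '' A = B

/-- A parametrization of the figure-eight knot in `ℝ³`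
(the (2,4)-pattern curve on a torus, i.e. the unique knot with a 4-crossing diagram). -/
noncomputable def figureEight (t : ℝ) : Fin 3 → ℝ :=
  ![(2 + Real.cos (2 * t)) * Real.cos (3 * t),
    (2 + Real.cos (2 * t)) * Real.sin (3 * t),
    Real.sin (4 * t)]

/-- The mirror reflection of `ℝ³` in the plane of the first two coordinates. -/
def mirror (p : Fin 3 → ℝ) : Fin 3 → ℝ := ![p 0, p 1, -(p 2)]

/-!
Twist every meridian disc of the solid torus `coreDist ≤ 7/4` about the core circle
`{r = 2, z = 0}` by the angle `π s` (damped to zero towards the boundary of the solid torus) and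
rotate `ℝ³` about the `z`-axis by `π s / 2`. The knot lies where the twist is undamped, so at
`s = 1` the twist acts on it as the point reflection `(r - 2, z) ↦ (2 - r, -z)` of each meridian
disc, sending the point of parameter `t` to `((2 - cos 2t) cos 3t, (2 - cos 2t) sin 3t, -sin 4t)`;
the quarter turn carries this to the mirror image of the point of parameter `t - π/2`.
-/

open Real Function

lemma isHomeomorph_of_neg_leftInverse {X : Type*} [TopologicalSpace X] {f : ℝ → X → X}
    (hf : Continuous (uncurry f)) (hinv : ∀ s x, f (-s) (f s x) = x) (s : ℝ) :
    IsHomeomorph (f s) :=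
  isHomeomorph_iff_exists_inverse.mpr ⟨hf.uncurry_left s, f (-s), hinv s,
    fun x => by simpa using hinv (-s) x, hf.uncurry_left (-s)⟩

lemma image_range_eq_of_shift {α β γ : Type*} [AddGroup α] {c : α} {φ : α → β}
    {f g : β → γ} (h : ∀ t, f (φ t) = g (φ (t + c))) :
    f '' Set.range φ = g '' Set.range φ := by
  rw [← Set.range_comp, ← Set.range_comp, ← (add_right_surjective c).range_comp (g ∘ φ)]
  exact congrArg Set.range (funext h)

noncomputable def rotZ (θ : ℝ) (p : Fin 3 → ℝ) : Fin 3 → ℝ :=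
  ![p 0 * cos θ - p 1 * sin θ, p 0 * sin θ + p 1 * cos θ, p 2]

lemma continuous_rotZ : Continuous (uncurry rotZ) := by
  unfold uncurry rotZ
  fun_prop

lemma rotZ_zero : rotZ 0 = id := by
  ext p i; fin_cases i <;> simp [rotZ]

lemma rotZ_neg_rotZ (θ : ℝ) (p : Fin 3 → ℝ) : rotZ (-θ) (rotZ θ p) = p := by
  ext i; fin_cases i <;> simp only [rotZ, cos_neg, sin_neg, Fin.isValue, Fin.zero_eta, Fin.mk_one,
    Fin.reduceFinMk, Matrix.cons_val]
  · linear_combination p 0 * sin_sq_add_cos_sq θ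
  · linear_combination p 1 * sin_sq_add_cos_sq θ

noncomputable def axisDist (p : Fin 3 → ℝ) : ℝ := √(p 0 ^ 2 + p 1 ^ 2)

noncomputable def coreDist (p : Fin 3 → ℝ) : ℝ := √((axisDist p - 2) ^ 2 + p 2 ^ 2)

noncomputable def twistProfile (d : ℝ) : ℝ := min 1 (max 0 (7 - 4 * d))

noncomputable def twistAngle (s : ℝ) (p : Fin 3 → ℝ) : ℝ :=
  π * s * twistProfile (coreDist p)

noncomputable def twistedRadius (s : ℝ) (p : Fin 3 → ℝ) : ℝ :=
  2 + (axisDist p - 2) * cos (twistAngle s p) - p 2 * sin (twistAngle s p)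

noncomputable def twistedHeight (s : ℝ) (p : Fin 3 → ℝ) : ℝ :=
  (axisDist p - 2) * sin (twistAngle s p) + p 2 * cos (twistAngle s p)

/- In the meridian half-plane through `p`, with coordinates `(axisDist - 2, z)` centred on the core
circle, this is the rotation by `twistAngle s p`. The twist is trivial where `axisDist p < 1/4`, so
the `max` only keeps the horizontal rescaling continuous across the `z`-axis. -/
noncomputable def meridianTwist (s : ℝ) (p : Fin 3 → ℝ) : Fin 3 → ℝ :=
  ![p 0 + p 0 * (twistedRadius s p - axisDist p) / max (axisDist p) (1 / 10),
    p 1 + p 1 * (twistedRadius s p - axisDist p) / max (axisDist p) (1 / 10),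
    twistedHeight s p]

lemma meridianTwist_apply_two (s : ℝ) (p : Fin 3 → ℝ) :
    meridianTwist s p 2 = twistedHeight s p :=
  rfl

@[fun_prop]
lemma continuous_axisDist : Continuous axisDist := by
  unfold axisDist
  fun_prop

lemma continuous_meridianTwist : Continuous (uncurry meridianTwist) := by
  unfold uncurry meridianTwist twistedRadius twistedHeight twistAngle twistProfile coreDist
  fun_prop (disch := exact fun _ => (lt_max_of_lt_right (by norm_num)).ne')

lemma axisDist_sq (p : Fin 3 → ℝ) : axisDist p ^ 2 = p 0 ^ 2 + p 1 ^ 2 :=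
  sq_sqrt (by positivity)

lemma twistProfile_eq_zero_of_le {d : ℝ} (h : 7 / 4 ≤ d) : twistProfile d = 0 := by
  rw [twistProfile, max_eq_left (by linarith), min_eq_right zero_le_one]

lemma twistProfile_eq_one_of_le {d : ℝ} (h : d ≤ 3 / 2) : twistProfile d = 1 := by
  rw [twistProfile, max_eq_right (by linarith), min_eq_left (by linarith)]

lemma twistAngle_eq_zero_of_le (s : ℝ) {p : Fin 3 → ℝ} (h : 7 / 4 ≤ coreDist p) :
    twistAngle s p = 0 := by
  rw [twistAngle, twistProfile_eq_zero_of_le h, mul_zero]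

lemma meridianTwist_of_twistAngle_eq_zero {s : ℝ} {p : Fin 3 → ℝ} (h : twistAngle s p = 0) :
    meridianTwist s p = p := by
  ext i; fin_cases i <;> simp [meridianTwist, twistedRadius, twistedHeight, h]

lemma meridianTwist_zero : meridianTwist 0 = id := by
  ext1 p
  exact meridianTwist_of_twistAngle_eq_zero (by simp [twistAngle])

lemma abs_axisDist_sub_two_le_coreDist (p : Fin 3 → ℝ) : |axisDist p - 2| ≤ coreDist p :=
  abs_le_sqrt (le_add_of_nonneg_right (sq_nonneg _))

lemma quarter_lt_axisDist_of_coreDist_lt {p : Fin 3 → ℝ} (h : coreDist p < 7 / 4) :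
    1 / 4 < axisDist p := by
  linarith [abs_lt.mp ((abs_axisDist_sub_two_le_coreDist p).trans_lt h)]

lemma twistedRadius_sub_two_sq_add_twistedHeight_sq (s : ℝ) (p : Fin 3 → ℝ) :
    (twistedRadius s p - 2) ^ 2 + twistedHeight s p ^ 2 = (axisDist p - 2) ^ 2 + p 2 ^ 2 := by
  rw [twistedRadius, twistedHeight]
  linear_combination ((axisDist p - 2) ^ 2 + p 2 ^ 2) * sin_sq_add_cos_sq (twistAngle s p)

lemma quarter_lt_twistedRadius_of_coreDist_lt (s : ℝ) {p : Fin 3 → ℝ}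
    (h : coreDist p < 7 / 4) : 1 / 4 < twistedRadius s p := by
  have : |twistedRadius s p - 2| ≤ coreDist p :=
    abs_le_sqrt (by
      rw [← twistedRadius_sub_two_sq_add_twistedHeight_sq s p]
      exact le_add_of_nonneg_right (sq_nonneg _))
  linarith [abs_lt.mp (this.trans_lt h)]

lemma meridianTwist_of_quarter_lt_axisDist (s : ℝ) {p : Fin 3 → ℝ} (h : 1 / 4 < axisDist p) :
    meridianTwist s p = ![p 0 * twistedRadius s p / axisDist p,
      p 1 * twistedRadius s p / axisDist p, twistedHeight s p] := by
  have hr : axisDist p ≠ 0 := by positivity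
  rw [meridianTwist, max_eq_left (by linarith)]
  ext i; fin_cases i <;> simp only [Fin.isValue, Fin.zero_eta, Fin.mk_one, Fin.reduceFinMk,
    Matrix.cons_val] <;> field_simp <;> ring

lemma axisDist_meridianTwist (s : ℝ) {p : Fin 3 → ℝ} (h : coreDist p < 7 / 4) :
    axisDist (meridianTwist s p) = twistedRadius s p := by
  have hr := quarter_lt_axisDist_of_coreDist_lt h
  have hR := quarter_lt_twistedRadius_of_coreDist_lt s h
  rw [meridianTwist_of_quarter_lt_axisDist s hr, axisDist]
  simp only [Matrix.cons_val_zero, Matrix.cons_val_one]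
  conv_rhs => rw [← sqrt_sq (x := twistedRadius s p) (by linarith)]
  congr 1
  field_simp
  linear_combination -axisDist_sq p

lemma coreDist_meridianTwist (s : ℝ) (p : Fin 3 → ℝ) :
    coreDist (meridianTwist s p) = coreDist p := by
  by_cases h : coreDist p < 7 / 4
  · rw [coreDist, axisDist_meridianTwist s h, coreDist, meridianTwist_apply_two,
      twistedRadius_sub_two_sq_add_twistedHeight_sq]
  · rw [meridianTwist_of_twistAngle_eq_zero (twistAngle_eq_zero_of_le s (not_lt.mp h))]

lemma twistAngle_meridianTwist (s : ℝ) (p : Fin 3 → ℝ) :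
    twistAngle (-s) (meridianTwist s p) = -twistAngle s p := by
  rw [twistAngle, twistAngle, coreDist_meridianTwist]
  ring

lemma meridianTwist_neg_meridianTwist (s : ℝ) (p : Fin 3 → ℝ) :
    meridianTwist (-s) (meridianTwist s p) = p := by
  by_cases h : coreDist p < 7 / 4
  · have hr := quarter_lt_axisDist_of_coreDist_lt h
    have hR := quarter_lt_twistedRadius_of_coreDist_lt s h
    have hq := meridianTwist_of_quarter_lt_axisDist s hr
    have hqr := axisDist_meridianTwist s h
    have hcs := sin_sq_add_cos_sq (twistAngle s p)
    have hradius : twistedRadius (-s) (meridianTwist s p) = axisDist p := by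
      rw [twistedRadius, twistAngle_meridianTwist, hqr, meridianTwist_apply_two, cos_neg, sin_neg,
        twistedRadius, twistedHeight]
      linear_combination (axisDist p - 2) * hcs
    have hheight : twistedHeight (-s) (meridianTwist s p) = p 2 := by
      rw [twistedHeight, twistAngle_meridianTwist, hqr, meridianTwist_apply_two, cos_neg, sin_neg,
        twistedRadius, twistedHeight]
      linear_combination p 2 * hcs
    rw [meridianTwist_of_quarter_lt_axisDist (-s) (hqr ▸ hR), hradius, hheight, hqr, hq]
    have : twistedRadius s p ≠ 0 := by positivity
    ext i; fin_cases i <;> simp only [Fin.isValue, Fin.zero_eta, Fin.mk_one, Fin.reduceFinMk,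
      Matrix.cons_val] <;> field_simp
  · have h0 := twistAngle_eq_zero_of_le s (not_lt.mp h)
    rw [meridianTwist_of_twistAngle_eq_zero (by rw [twistAngle_meridianTwist, h0, neg_zero]),
      meridianTwist_of_twistAngle_eq_zero h0]

lemma axisDist_figureEight (t : ℝ) : axisDist (figureEight t) = 2 + cos (2 * t) := by
  rw [axisDist, ← sqrt_sq (x := 2 + cos (2 * t)) (by linarith [neg_one_le_cos (2 * t)])]
  congr 1
  simp only [figureEight, Matrix.cons_val_zero, Matrix.cons_val_one]
  linear_combination (2 + cos (2 * t)) ^ 2 * sin_sq_add_cos_sq (3 * t)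

lemma coreDist_figureEight_le (t : ℝ) : coreDist (figureEight t) ≤ 3 / 2 := by
  rw [coreDist, axisDist_figureEight, sqrt_le_left (by norm_num)]
  simp only [figureEight, Matrix.cons_val_two, Matrix.tail_cons, Matrix.head_cons]
  nlinarith [cos_sq_le_one (2 * t), sin_sq_le_one (4 * t)]

lemma meridianTwist_one_of_coreDist_le {p : Fin 3 → ℝ} (h : coreDist p ≤ 3 / 2) :
    meridianTwist 1 p = ![p 0 * (4 - axisDist p) / axisDist p,
      p 1 * (4 - axisDist p) / axisDist p, -p 2] := by
  have hangle : twistAngle 1 p = π := by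
    rw [twistAngle, twistProfile_eq_one_of_le h, mul_one, mul_one]
  rw [meridianTwist_of_quarter_lt_axisDist 1 (quarter_lt_axisDist_of_coreDist_lt (by linarith)),
    twistedRadius, twistedHeight, hangle, cos_pi, sin_pi]
  ext i; fin_cases i <;> simp only [Fin.isValue, Fin.zero_eta, Fin.mk_one, Fin.reduceFinMk,
    Matrix.cons_val] <;> ring

lemma rotZ_meridianTwist_figureEight (t : ℝ) :
    rotZ (π / 2) (meridianTwist 1 (figureEight t)) = mirror (figureEight (t - π / 2)) := by
  have hr : 2 + cos (2 * t) ≠ 0 := by linarith [neg_one_le_cos (2 * t)]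
  have h2 : cos (2 * (t - π / 2)) = -cos (2 * t) := by
    rw [show 2 * (t - π / 2) = 2 * t - π by ring, cos_sub_pi]
  have h3c : cos (3 * (t - π / 2)) = -sin (3 * t) := by
    rw [show 3 * (t - π / 2) = 3 * t + π / 2 - 2 * π by ring, cos_sub_two_pi, cos_add_pi_div_two]
  have h3s : sin (3 * (t - π / 2)) = cos (3 * t) := by
    rw [show 3 * (t - π / 2) = 3 * t + π / 2 - 2 * π by ring, sin_sub_two_pi, sin_add_pi_div_two]
  have h4 : sin (4 * (t - π / 2)) = sin (4 * t) := by
    rw [show 4 * (t - π / 2) = 4 * t - 2 * π by ring, sin_sub_two_pi]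
  rw [meridianTwist_one_of_coreDist_le (coreDist_figureEight_le t), axisDist_figureEight]
  ext i; fin_cases i <;> simp only [rotZ, mirror, figureEight, h2, h3c, h3s, h4, cos_pi_div_two,
    sin_pi_div_two, Fin.isValue, Fin.zero_eta, Fin.mk_one, Fin.reduceFinMk, Matrix.cons_val] <;>
    field_simp <;> ring

/-- Listing: the figure-eight knot is ambient isotopic to its mirror image;
that is, the figure-eight knot is amphicheiral. -/
theorem figureEight_amphicheiral :
    AmbientIsotopic (Set.range figureEight) (mirror '' Set.range figureEight) := by
  refine ⟨fun s => rotZ (π / 2 * s) ∘ meridianTwist s, ?_, fun s => ?_, ?_, ?_⟩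
  · exact continuous_rotZ.comp
      ((continuous_const.mul continuous_fst).prodMk continuous_meridianTwist)
  · exact (isHomeomorph_of_neg_leftInverse continuous_rotZ rotZ_neg_rotZ _).comp
      (isHomeomorph_of_neg_leftInverse continuous_meridianTwist meridianTwist_neg_meridianTwist s)
  · simp [rotZ_zero, meridianTwist_zero]
  · exact image_range_eq_of_shift fun t => by
      simpa [sub_eq_add_neg] using rotZ_meridianTwist_figureEight t
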